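/- arXiv:1601.03353 — 2 statements merged into one kernel-verified Lean document; each statement's English description precedes it below -/
import Mathlib

section
/- Let λ ∈ ℂ with |λ| = 1 and suppose λ is not a root of unity. Consider the symbol φ(z) = λz. Then the composition operator C_φ : H^∞(𝔻) → H^∞(𝔻) is not mean ergodic: there exists f ∈ H^∞(𝔻) for which the Cesàro means (C_φ)_[n] f do not converge in the norm of H^∞(𝔻). -/
open Metric Set Filter Complex
open scoped Topology Classical

noncomputable section

/-- Membership in the disc algebra `A(𝔻)`: continuous on the closed unit disc and
holomorphic on the open unit disc. -/
def IsDiscAlg (f : ℂ → ℂ) : Prop :=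
  ContinuousOn f (closedBall (0:ℂ) 1) ∧ DifferentiableOn ℂ f (ball (0:ℂ) 1)

/-- Membership in `H^∞(𝔻)`: bounded and holomorphic on the open unit disc. -/
def IsHInf (f : ℂ → ℂ) : Prop :=
  DifferentiableOn ℂ f (ball (0:ℂ) 1) ∧ ∃ M : ℝ, ∀ z ∈ ball (0:ℂ) 1, ‖f z‖ ≤ M

/-- The Cesàro means `(C_φ)_[n] f = (1/n) ∑_{m=1}^n f ∘ φ^m` of the composition
operator `C_φ f = f ∘ φ`. -/
def cesaro (φ f : ℂ → ℂ) (n : ℕ) (z : ℂ) : ℂ :=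
  (n : ℂ)⁻¹ * ∑ m ∈ Finset.Icc 1 n, f (φ^[m] z)

/-- `C_φ` is mean ergodic on `A(𝔻)`: for each `f ∈ A(𝔻)` the Cesàro means converge
in the sup norm on the closed disc. -/
def MeanErgodicDiscAlg (φ : ℂ → ℂ) : Prop :=
  ∀ f : ℂ → ℂ, IsDiscAlg f →
    ∃ g : ℂ → ℂ, TendstoUniformlyOn (cesaro φ f) g atTop (closedBall (0:ℂ) 1)

/-- `C_φ` is uniformly mean ergodic on `A(𝔻)`: the Cesàro means converge in operator
norm, i.e. uniformly over the unit ball of `A(𝔻)`. -/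
def UnifMeanErgodicDiscAlg (φ : ℂ → ℂ) : Prop :=
  ∃ P : (ℂ → ℂ) → ℂ → ℂ, ∀ ε > (0:ℝ), ∃ N : ℕ, ∀ n ≥ N,
    ∀ f : ℂ → ℂ, IsDiscAlg f → (∀ z ∈ closedBall (0:ℂ) 1, ‖f z‖ ≤ 1) →
      ∀ z ∈ closedBall (0:ℂ) 1, ‖cesaro φ f n z - P f z‖ ≤ ε

/-- `C_φ` is mean ergodic on `H^∞(𝔻)`: for each `f ∈ H^∞(𝔻)` the Cesàro means converge
in the sup norm on the open disc. -/
def MeanErgodicHInf (φ : ℂ → ℂ) : Prop :=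
  ∀ f : ℂ → ℂ, IsHInf f →
    ∃ g : ℂ → ℂ, TendstoUniformlyOn (cesaro φ f) g atTop (ball (0:ℂ) 1)

/-- `C_φ` is uniformly mean ergodic on `H^∞(𝔻)`: the Cesàro means converge in operator
norm, i.e. uniformly over the unit ball of `H^∞(𝔻)`. -/
def UnifMeanErgodicHInf (φ : ℂ → ℂ) : Prop :=
  ∃ P : (ℂ → ℂ) → ℂ → ℂ, ∀ ε > (0:ℝ), ∃ N : ℕ, ∀ n ≥ N,
    ∀ f : ℂ → ℂ, IsHInf f → (∀ z ∈ ball (0:ℂ) 1, ‖f z‖ ≤ 1) →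
      ∀ z ∈ ball (0:ℂ) 1, ‖cesaro φ f n z - P f z‖ ≤ ε

/-- `φ` is an automorphism (biholomorphic self-map) of the open unit disc. -/
def IsDiscAutomorphism (φ : ℂ → ℂ) : Prop :=
  DifferentiableOn ℂ φ (ball (0:ℂ) 1) ∧ MapsTo φ (ball (0:ℂ) 1) (ball (0:ℂ) 1) ∧
  ∃ ψ : ℂ → ℂ, DifferentiableOn ℂ ψ (ball (0:ℂ) 1) ∧
    MapsTo ψ (ball (0:ℂ) 1) (ball (0:ℂ) 1) ∧
    (∀ z ∈ ball (0:ℂ) 1, ψ (φ z) = z) ∧ ∀ z ∈ ball (0:ℂ) 1, φ (ψ z) = z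

/-- An elliptic automorphism of the disc: an automorphism with a fixed point in `𝔻`. -/
def IsEllipticAutomorphism (φ : ℂ → ℂ) : Prop :=
  IsDiscAutomorphism φ ∧ ∃ z ∈ ball (0:ℂ) 1, φ z = z

/-- A hyperbolic automorphism of the disc: an automorphism with exactly two fixed
points, both on the unit circle. -/
def IsHyperbolicAutomorphism (φ : ℂ → ℂ) : Prop :=
  IsDiscAutomorphism φ ∧ ∃ p q : ℂ, p ≠ q ∧ ‖p‖ = 1 ∧ ‖q‖ = 1 ∧ φ p = p ∧ φ q = q ∧
    ∀ z ∈ closedBall (0:ℂ) 1, φ z = z → z = p ∨ z = q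

/-- A parabolic automorphism of the disc: an automorphism with exactly one fixed
point, lying on the unit circle. -/
def IsParabolicAutomorphism (φ : ℂ → ℂ) : Prop :=
  IsDiscAutomorphism φ ∧ ∃ p : ℂ, ‖p‖ = 1 ∧ φ p = p ∧
    ∀ z ∈ closedBall (0:ℂ) 1, φ z = z → z = p

/-- A set `J ⊆ ℕ` has density one: `#(J ∩ [0,N]) / N → 1` as `N → ∞`. -/
def HasDensityOne (J : Set ℕ) : Prop :=
  Tendsto (fun N : ℕ => (((Finset.range (N + 1)).filter (fun n => n ∈ J)).card : ℝ) / N)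
    atTop (𝓝 1)

/-- A typical weight on `𝔻`: continuous, strictly positive, bounded, radial,
non-increasing in `|z|`, and tending to `0` as `|z| → 1`. -/
def IsTypicalWeight (v : ℂ → ℝ) : Prop :=
  ContinuousOn v (ball (0:ℂ) 1) ∧ (∀ z ∈ ball (0:ℂ) 1, 0 < v z) ∧
  (∃ M : ℝ, ∀ z ∈ ball (0:ℂ) 1, v z ≤ M) ∧
  (∀ z ∈ ball (0:ℂ) 1, ∀ w ∈ ball (0:ℂ) 1, ‖z‖ = ‖w‖ → v z = v w) ∧
  (∀ z ∈ ball (0:ℂ) 1, ∀ w ∈ ball (0:ℂ) 1, ‖z‖ ≤ ‖w‖ → v w ≤ v z) ∧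
  (∀ ε > (0:ℝ), ∃ r : ℝ, r < 1 ∧ ∀ z ∈ ball (0:ℂ) 1, r ≤ ‖z‖ → v z < ε)

/-- Membership in the weighted space `H_v^∞`. -/
def IsHvInf (v : ℂ → ℝ) (f : ℂ → ℂ) : Prop :=
  DifferentiableOn ℂ f (ball (0:ℂ) 1) ∧ ∃ M : ℝ, ∀ z ∈ ball (0:ℂ) 1, v z * ‖f z‖ ≤ M

/-- Membership in the weighted space `H_v^0`. -/
def IsHv0 (v : ℂ → ℝ) (f : ℂ → ℂ) : Prop :=
  IsHvInf v f ∧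
  ∀ ε > (0:ℝ), ∃ r : ℝ, r < 1 ∧ ∀ z ∈ ball (0:ℂ) 1, r ≤ ‖z‖ → v z * ‖f z‖ < ε


/-!
When `‖λ‖ = 1` and `λ` is not a root of unity, the Cesàro means of every `f` holomorphic on `𝔻`
converge pointwise to `f 0`: in the Taylor expansion of `f` the `n`-th coefficient gets multiplied
by the mean `(1/N) ∑_{m=1}^N λ^{nm}`, which tends to `0` for `n ≠ 0`, and dominated convergence
applies. A uniform limit of the Cesàro means would therefore be the constant `f 0`.

Take for `f` the Blaschke product `B` whose zeros are the orbit points `λ^m ρ_n`, `1 ≤ m ≤ n`, with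
`ρ_n = 1 - 2^{-(n+1)}`. Since `∑ n (1 - ρ_n) < ∞`, `B` is a bounded holomorphic function with
`B 0 ≠ 0`, while its `n`-th Cesàro mean vanishes at `ρ_n`. So the means stay at sup-distance at
least `‖B 0‖` from `B 0`.
-/

def geomMean (μ : ℂ) (N : ℕ) : ℂ := (N : ℂ)⁻¹ * ∑ m ∈ Finset.Icc 1 N, μ ^ m

lemma norm_sum_Icc_pow_le {μ : ℂ} (hμ : ‖μ‖ = 1) (hμ1 : μ ≠ 1) (N : ℕ) :
    ‖∑ m ∈ Finset.Icc 1 N, μ ^ m‖ ≤ 2 / ‖μ - 1‖ := by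
  rw [← Finset.Ico_add_one_right_eq_Icc, geom_sum_Ico hμ1 (by omega), norm_div]
  gcongr
  calc ‖μ ^ (N + 1) - μ ^ 1‖ ≤ ‖μ ^ (N + 1)‖ + ‖μ ^ 1‖ := norm_sub_le _ _
    _ = 2 := by simp [hμ]; norm_num

lemma norm_geomMean_le_one {μ : ℂ} (hμ : ‖μ‖ = 1) (N : ℕ) : ‖geomMean μ N‖ ≤ 1 := by
  rcases N.eq_zero_or_pos with rfl | hN
  · simp [geomMean]
  calc ‖geomMean μ N‖ ≤ (N : ℝ)⁻¹ * ∑ m ∈ Finset.Icc 1 N, ‖μ ^ m‖ := by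
        rw [geomMean, norm_mul, norm_inv, Complex.norm_natCast]
        gcongr
        exact norm_sum_le _ _
    _ = 1 := by simp [hμ, hN.ne']

lemma tendsto_geomMean {μ : ℂ} (hμ : ‖μ‖ = 1) :
    Tendsto (geomMean μ) atTop (𝓝 (if μ = 1 then 1 else 0)) := by
  split_ifs with hμ1
  · refine tendsto_const_nhds.congr' ?_
    filter_upwards [eventually_ge_atTop 1] with N hN
    have : (N : ℂ) ≠ 0 := by exact_mod_cast (by omega : N ≠ 0)
    simp [geomMean, hμ1, inv_mul_cancel₀ this]
  · refine squeeze_zero_norm (fun N => ?_)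
      (tendsto_const_div_atTop_nhds_zero_nat (2 / ‖μ - 1‖))
    rw [geomMean, norm_mul, norm_inv, Complex.norm_natCast, div_eq_inv_mul (2 / _)]
    gcongr
    exact norm_sum_Icc_pow_le hμ hμ1 N

section Rotation

variable {lam : ℂ}

lemma hasSum_cesaro_rotation (hlam : ‖lam‖ = 1) {f : ℂ → ℂ}
    {p : FormalMultilinearSeries ℂ ℂ ℂ} {r : ENNReal} (hp : HasFPowerSeriesOnBall f p 0 r)
    {z : ℂ} (hz : ‖z‖ₑ < r) (N : ℕ) :
    HasSum (fun n => geomMean (lam ^ n) N * (z ^ n * p.coeff n))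
      (cesaro (fun w => lam * w) f N z) := by
  have hsum (m : ℕ) :
      HasSum (fun n => (lam ^ n) ^ m * (z ^ n * p.coeff n)) (f (lam ^ m * z)) := by
    have hlam' : ‖lam‖ₑ = 1 := by rw [← ofReal_norm, hlam, ENNReal.ofReal_one]
    have := hp.hasSum (y := lam ^ m * z) (by simpa [hlam'] using hz)
    simpa [mul_pow, ← pow_mul, mul_comm, mul_left_comm, mul_assoc] using this
  simp only [cesaro, geomMean, mul_left_iterate_apply, mul_assoc, Finset.sum_mul]
  exact (hasSum_sum fun m _ => hsum m).mul_left _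

lemma tendsto_cesaro_rotation (hlam : ‖lam‖ = 1) (hirr : ∀ k : ℕ, 0 < k → lam ^ k ≠ 1)
    {f : ℂ → ℂ} (hf : DifferentiableOn ℂ f (ball (0 : ℂ) 1)) {z : ℂ}
    (hz : z ∈ ball (0 : ℂ) 1) :
    Tendsto (fun N => cesaro (fun w => lam * w) f N z) atTop (𝓝 (f 0)) := by
  obtain ⟨R, hzR, hR1⟩ := exists_between (mem_ball_zero_iff.mp hz)
  lift R to NNReal using (norm_nonneg z).trans hzR.le
  set p := cauchyPowerSeries f 0 R
  have hp : HasFPowerSeriesOnBall f p 0 R :=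
    (hf.mono (closedBall_subset_ball hR1)).hasFPowerSeriesOnBall
      (by exact_mod_cast (norm_nonneg z).trans_lt hzR)
  have hzR' : ‖z‖ₑ < R := by
    rw [← ofReal_norm, ← ENNReal.ofReal_coe_nnreal]
    exact (ENNReal.ofReal_lt_ofReal_iff_of_nonneg (norm_nonneg z)).mpr hzR
  have hlim (n : ℕ) : Tendsto (fun N => geomMean (lam ^ n) N * (z ^ n * p.coeff n)) atTop
      (𝓝 (if n = 0 then p.coeff 0 else 0)) := by
    have hpow : lam ^ n = 1 ↔ n = 0 :=
      ⟨fun h => by_contra fun hn => hirr n (by omega) h, by simp +contextual⟩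
    convert (tendsto_geomMean (μ := lam ^ n) (by simp [hlam])).mul_const (z ^ n * p.coeff n)
      using 2
    split_ifs <;> simp_all
  have hbound (N n : ℕ) : ‖geomMean (lam ^ n) N * (z ^ n * p.coeff n)‖ ≤ ‖p n fun _ => z‖ := by
    rw [norm_mul, p.apply_eq_pow_smul_coeff, smul_eq_mul]
    exact mul_le_of_le_one_left (norm_nonneg _) (norm_geomMean_le_one (by simp [hlam]) N)
  have hz' : z ∈ Metric.eball (0 : ℂ) p.radius :=
    Metric.eball_subset_eball hp.r_le (by simpa [Metric.mem_eball] using hzR)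
  have := tendsto_tsum_of_dominated_convergence (p.summable_norm_apply hz') hlim
    (Eventually.of_forall (hbound ·))
  rw [tsum_ite_eq, FormalMultilinearSeries.coeff, hp.coeff_zero] at this
  simpa only [fun N => (hasSum_cesaro_rotation hlam hp hzR' N).tsum_eq] using this

end Rotation

open ComplexConjugate

/-- The factor `‖a‖ / a` normalises `blaschkeFactor a 0 = ‖a‖`, which makes infinite products of
these factors converge. -/
def blaschkeFactor (a z : ℂ) : ℂ := ‖a‖ / a * ((a - z) / (1 - conj a * z))

lemma blaschkeFactor_self (a : ℂ) : blaschkeFactor a a = 0 := by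
  simp [blaschkeFactor]

lemma blaschkeFactor_zero {a : ℂ} (ha : a ≠ 0) : blaschkeFactor a 0 = ‖a‖ := by
  simp [blaschkeFactor, ha]

lemma norm_norm_div_self_le_one (a : ℂ) : ‖(‖a‖ / a : ℂ)‖ ≤ 1 := by
  rcases eq_or_ne a 0 with rfl | ha
  · simp
  · simp [ha]

lemma sub_norm_le_norm_one_sub_conj_mul {a z : ℂ} (ha : ‖a‖ ≤ 1) :
    1 - ‖z‖ ≤ ‖1 - conj a * z‖ := by
  calc 1 - ‖z‖ ≤ 1 - ‖conj a * z‖ := by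
        rw [norm_mul, Complex.norm_conj]; nlinarith [norm_nonneg a, norm_nonneg z]
    _ ≤ ‖1 - conj a * z‖ := by simpa using norm_sub_norm_le (1 : ℂ) (conj a * z)

lemma one_sub_conj_mul_ne_zero {a z : ℂ} (ha : ‖a‖ ≤ 1) (hz : ‖z‖ < 1) :
    1 - conj a * z ≠ 0 :=
  norm_pos_iff.mp ((sub_pos.mpr hz).trans_le (sub_norm_le_norm_one_sub_conj_mul ha))

lemma norm_one_sub_conj_mul_sq_sub_norm_sub_sq (a z : ℂ) :
    ‖1 - conj a * z‖ ^ 2 - ‖a - z‖ ^ 2 = (1 - ‖a‖ ^ 2) * (1 - ‖z‖ ^ 2) := by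
  simp only [Complex.sq_norm, Complex.normSq_apply, Complex.sub_re, Complex.sub_im,
    Complex.mul_re, Complex.mul_im, Complex.conj_re, Complex.conj_im, Complex.one_re,
    Complex.one_im]
  ring

lemma norm_blaschkeFactor_le_one {a z : ℂ} (ha : ‖a‖ ≤ 1) (hz : ‖z‖ < 1) :
    ‖blaschkeFactor a z‖ ≤ 1 := by
  have hsq : ‖a - z‖ ^ 2 ≤ ‖1 - conj a * z‖ ^ 2 := by
    have := norm_one_sub_conj_mul_sq_sub_norm_sub_sq a z
    have : 0 ≤ (1 - ‖a‖ ^ 2) * (1 - ‖z‖ ^ 2) := by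
      apply mul_nonneg <;> nlinarith [norm_nonneg a, norm_nonneg z]
    linarith
  have hquot : ‖(a - z) / (1 - conj a * z)‖ ≤ 1 := by
    rw [norm_div, div_le_one (norm_pos_iff.mpr (one_sub_conj_mul_ne_zero ha hz))]
    exact (pow_le_pow_iff_left₀ (norm_nonneg _) (norm_nonneg _) two_ne_zero).mp hsq
  rw [blaschkeFactor, norm_mul]
  exact mul_le_one₀ (norm_norm_div_self_le_one a) (norm_nonneg _) hquot

lemma norm_one_sub_blaschkeFactor_le {a z : ℂ} (ha0 : a ≠ 0) (ha : ‖a‖ ≤ 1) (hz : ‖z‖ < 1) :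
    ‖1 - blaschkeFactor a z‖ ≤ 2 * (1 - ‖a‖) / (1 - ‖z‖) := by
  have hden := one_sub_conj_mul_ne_zero ha hz
  have key : 1 - blaschkeFactor a z
      = ((1 - ‖a‖ : ℝ) : ℂ) * (a + ‖a‖ * z) / (a * (1 - conj a * z)) := by
    have hden' : 1 - z * conj a ≠ 0 := by rwa [mul_comm]
    rw [blaschkeFactor]
    field_simp
    push_cast
    linear_combination -z * Complex.mul_conj' a
  have hnum : ‖a + ‖a‖ * z‖ ≤ 2 * ‖a‖ := by
    calc ‖a + ‖a‖ * z‖ ≤ ‖a‖ + ‖a‖ * ‖z‖ := by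
          refine (norm_add_le _ _).trans ?_; simp
      _ ≤ 2 * ‖a‖ := by nlinarith [norm_nonneg a]
  have ha' : 0 < ‖a‖ := norm_pos_iff.mpr ha0
  rw [key, norm_div, norm_mul, norm_mul, Complex.norm_real, Real.norm_of_nonneg (by linarith)]
  calc (1 - ‖a‖) * ‖a + ‖a‖ * z‖ / (‖a‖ * ‖1 - conj a * z‖)
      ≤ (1 - ‖a‖) * (2 * ‖a‖) / (‖a‖ * (1 - ‖z‖)) := by
        gcongr
        exact sub_norm_le_norm_one_sub_conj_mul ha
    _ = 2 * (1 - ‖a‖) / (1 - ‖z‖) := by field_simp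

lemma differentiableOn_blaschkeFactor {a : ℂ} (ha : ‖a‖ ≤ 1) :
    DifferentiableOn ℂ (blaschkeFactor a) (ball (0 : ℂ) 1) := by
  intro z hz
  have hden := one_sub_conj_mul_ne_zero ha (mem_ball_zero_iff.mp hz)
  unfold blaschkeFactor
  fun_prop (disch := exact hden)

def blaschkeProduct {ι : Type*} (a : ι → ℂ) (z : ℂ) : ℂ := ∏' i, blaschkeFactor (a i) z

section BlaschkeProduct

variable {ι : Type*} {a : ι → ℂ}

lemma hasProdLocallyUniformlyOn_blaschkeProduct (ha0 : ∀ i, a i ≠ 0) (ha1 : ∀ i, ‖a i‖ ≤ 1)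
    (hs : Summable fun i => 1 - ‖a i‖) {R : ℝ} (hR : R < 1) :
    HasProdLocallyUniformlyOn (fun i => blaschkeFactor (a i)) (blaschkeProduct a)
      (ball (0 : ℂ) R) := by
  have hbound : ∀ i, ∀ z ∈ ball (0 : ℂ) R,
      ‖blaschkeFactor (a i) z - 1‖ ≤ 2 * (1 - ‖a i‖) / (1 - R) := by
    intro i z hz
    have hzR : ‖z‖ < R := mem_ball_zero_iff.mp hz
    rw [norm_sub_rev]
    refine (norm_one_sub_blaschkeFactor_le (ha0 i) (ha1 i) (hzR.trans hR)).trans ?_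
    gcongr
    linarith [ha1 i]
  have := Summable.hasProdLocallyUniformlyOn_one_add isOpen_ball
    ((hs.mul_left 2).div_const (1 - R)) (Eventually.of_forall hbound)
    (fun i => ((differentiableOn_blaschkeFactor (ha1 i)).mono
      (ball_subset_ball hR.le)).continuousOn.sub continuousOn_const)
  simp only [add_sub_cancel] at this
  exact this

lemma hasProd_blaschkeProduct (ha0 : ∀ i, a i ≠ 0) (ha1 : ∀ i, ‖a i‖ ≤ 1)
    (hs : Summable fun i => 1 - ‖a i‖) {z : ℂ} (hz : ‖z‖ < 1) :
    HasProd (fun i => blaschkeFactor (a i) z) (blaschkeProduct a z) := by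
  obtain ⟨R, hzR, hR1⟩ := exists_between hz
  exact (hasProdLocallyUniformlyOn_blaschkeProduct ha0 ha1 hs hR1).hasProd
    (mem_ball_zero_iff.mpr hzR)

lemma differentiableOn_blaschkeProduct (ha0 : ∀ i, a i ≠ 0) (ha1 : ∀ i, ‖a i‖ ≤ 1)
    (hs : Summable fun i => 1 - ‖a i‖) :
    DifferentiableOn ℂ (blaschkeProduct a) (ball (0 : ℂ) 1) := by
  intro z hz
  obtain ⟨R, hzR, hR1⟩ := exists_between (mem_ball_zero_iff.mp hz)
  have hdiff : DifferentiableOn ℂ (blaschkeProduct a) (ball (0 : ℂ) R) :=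
    (hasProdLocallyUniformlyOn_blaschkeProduct ha0 ha1 hs hR1).differentiableOn
      (Eventually.of_forall fun s => DifferentiableOn.fun_finsetProd fun i _ =>
        (differentiableOn_blaschkeFactor (ha1 i)).mono (ball_subset_ball hR1.le))
      isOpen_ball
  exact (hdiff.differentiableAt
    (isOpen_ball.mem_nhds (mem_ball_zero_iff.mpr hzR))).differentiableWithinAt

lemma norm_blaschkeProduct_le_one (ha0 : ∀ i, a i ≠ 0) (ha1 : ∀ i, ‖a i‖ ≤ 1)
    (hs : Summable fun i => 1 - ‖a i‖) {z : ℂ} (hz : ‖z‖ < 1) :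
    ‖blaschkeProduct a z‖ ≤ 1 :=
  le_of_tendsto' (hasProd_blaschkeProduct ha0 ha1 hs hz).norm fun _ =>
    Finset.prod_le_one (fun _ _ => norm_nonneg _)
      fun i _ => norm_blaschkeFactor_le_one (ha1 i) hz

lemma blaschkeProduct_apply_self (i : ι) : blaschkeProduct a (a i) = 0 :=
  tprod_of_exists_eq_zero ⟨i, blaschkeFactor_self _⟩

lemma blaschkeProduct_zero_ne_zero (ha0 : ∀ i, a i ≠ 0) (ha1 : ∀ i, ‖a i‖ ≤ 1)
    (hs : Summable fun i => 1 - ‖a i‖) : blaschkeProduct a 0 ≠ 0 := by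
  have h := tprod_one_add_ne_zero_of_summable (f := fun i => ((‖a i‖ - 1 : ℝ) : ℂ))
    (fun i => by simpa using ha0 i)
    (hs.congr fun i => by
      rw [Complex.norm_real, Real.norm_of_nonpos (by linarith [ha1 i])]; ring)
  simpa [blaschkeProduct, blaschkeFactor_zero (ha0 _)] using h

lemma isHInf_blaschkeProduct (ha0 : ∀ i, a i ≠ 0) (ha1 : ∀ i, ‖a i‖ ≤ 1)
    (hs : Summable fun i => 1 - ‖a i‖) : IsHInf (blaschkeProduct a) :=
  ⟨differentiableOn_blaschkeProduct ha0 ha1 hs,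
    1, fun _ hz => norm_blaschkeProduct_le_one ha0 ha1 hs (mem_ball_zero_iff.mp hz)⟩

end BlaschkeProduct

def orbitRadius (n : ℕ) : ℝ := 1 - 2⁻¹ ^ (n + 1)

lemma orbitRadius_pos (n : ℕ) : 0 < orbitRadius n := by
  have : (2⁻¹ : ℝ) ^ (n + 1) ≤ 2⁻¹ := pow_le_of_le_one (by norm_num) (by norm_num) (by omega)
  rw [orbitRadius]; linarith

lemma orbitRadius_lt_one (n : ℕ) : orbitRadius n < 1 := by
  rw [orbitRadius]; linarith [pow_pos (by norm_num : (0 : ℝ) < 2⁻¹) (n + 1)]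

lemma summable_mul_one_sub_orbitRadius :
    Summable fun n : ℕ => (n : ℝ) * (1 - orbitRadius n) := by
  have := (summable_pow_mul_geometric_of_norm_lt_one 1 (r := (2⁻¹ : ℝ)) (by norm_num)).mul_right
    2⁻¹
  simpa [orbitRadius, pow_succ, mul_assoc] using this

def rotationZeros (lam : ℂ) (i : Σ n : ℕ, Fin n) : ℂ :=
  lam ^ ((i.2 : ℕ) + 1) * orbitRadius i.1

section RotationZeros

variable {lam : ℂ}

lemma norm_rotationZeros (hlam : ‖lam‖ = 1) (i : Σ n : ℕ, Fin n) :
    ‖rotationZeros lam i‖ = orbitRadius i.1 := by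
  simp [rotationZeros, hlam, (orbitRadius_pos _).le]

lemma rotationZeros_ne_zero (hlam : ‖lam‖ = 1) (i : Σ n : ℕ, Fin n) : rotationZeros lam i ≠ 0 :=
  norm_ne_zero_iff.mp ((norm_rotationZeros hlam i).trans_ne (orbitRadius_pos _).ne')

lemma norm_rotationZeros_le_one (hlam : ‖lam‖ = 1) (i : Σ n : ℕ, Fin n) :
    ‖rotationZeros lam i‖ ≤ 1 :=
  (norm_rotationZeros hlam i).trans_le (orbitRadius_lt_one _).le

lemma summable_one_sub_norm_rotationZeros (hlam : ‖lam‖ = 1) :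
    Summable fun i => 1 - ‖rotationZeros lam i‖ := by
  simp only [norm_rotationZeros hlam]
  refine (summable_sigma_of_nonneg fun i => sub_nonneg.mpr (orbitRadius_lt_one _).le).mpr
    ⟨fun _ => Summable.of_finite, ?_⟩
  simpa only [tsum_fintype, Finset.sum_const, Finset.card_univ, Fintype.card_fin, nsmul_eq_mul]
    using summable_mul_one_sub_orbitRadius

lemma cesaro_blaschkeProduct_rotationZeros (n : ℕ) :
    cesaro (fun w => lam * w) (blaschkeProduct (rotationZeros lam)) n (orbitRadius n) = 0 := by
  rw [cesaro, Finset.sum_eq_zero, mul_zero]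
  intro m hm
  obtain ⟨hm1, hmn⟩ := Finset.mem_Icc.mp hm
  have : lam ^ m * orbitRadius n = rotationZeros lam ⟨n, ⟨m - 1, by omega⟩⟩ := by
    simp [rotationZeros, Nat.sub_add_cancel hm1]
  rw [mul_left_iterate_apply, this, blaschkeProduct_apply_self]

end RotationZeros

/-- **Rotation symbol, irrational case: not mean ergodic on `H^∞(𝔻)`.** If `|λ| = 1` and `λ`
is not a root of unity, then for `φ(z) = λz` there exists `f ∈ H^∞(𝔻)` whose Cesàro means
`(C_φ)_[n] f` do not converge in the norm of `H^∞(𝔻)`. -/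
theorem stmt_3 (lam : ℂ) (hlam : ‖lam‖ = 1) (hnotroot : ∀ j : ℕ, 0 < j → lam ^ j ≠ 1) :
    ∃ f : ℂ → ℂ, IsHInf f ∧
      ∀ g : ℂ → ℂ, ¬ TendstoUniformlyOn (cesaro (fun w => lam * w) f) g
        atTop (ball (0:ℂ) 1) := by
  have ha0 := rotationZeros_ne_zero hlam
  have ha1 := norm_rotationZeros_le_one hlam
  have hs := summable_one_sub_norm_rotationZeros hlam
  set B := blaschkeProduct (rotationZeros lam)
  have hB := isHInf_blaschkeProduct ha0 ha1 hs
  refine ⟨B, hB, fun g hg => ?_⟩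
  have hg_eq : ∀ x ∈ ball (0 : ℂ) 1, g x = B 0 := fun x hx =>
    tendsto_nhds_unique (hg.tendsto_at hx) (tendsto_cesaro_rotation hlam hnotroot hB.1 hx)
  obtain ⟨N, hN⟩ := (Metric.tendstoUniformlyOn_iff.mp hg _
    (norm_pos_iff.mpr (blaschkeProduct_zero_ne_zero ha0 ha1 hs))).exists_forall_of_atTop
  have hx : (orbitRadius N : ℂ) ∈ ball (0 : ℂ) 1 := by
    simpa [abs_of_pos (orbitRadius_pos N)] using orbitRadius_lt_one N
  have := hN N le_rfl _ hx
  rw [hg_eq _ hx, cesaro_blaschkeProduct_rotationZeros, dist_zero_right] at this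
  exact lt_irrefl _ this
end
end

section
/- Let φ ∈ A(𝔻) be a symbol mapping 𝔻̄ into 𝔻̄ whose iterates φ^n converge to 0 uniformly on the compact subsets of 𝔻 (0 is the Denjoy–Wolff point of φ). Then the following are equivalent for the composition operator C_φ on A(𝔻): (i) C_φ is mean ergodic; (ii) C_φ is uniformly mean ergodic; (iii) lim_{n→∞} φ^n(z) = 0 for every z ∈ 𝔻̄. -/
open Metric Set Filter Complex
open scoped Topology Classical

noncomputable section

/-!
(iii) ⇒ (ii): by compactness of `𝔻̄` some iterate `φ^N` maps `𝔻̄` into a compact subset of `𝔻`,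
so `φ^n → 0` uniformly on `𝔻̄`; with the Schwarz bound `|f w - f 0| ≤ 2 |w|` for `‖f‖ ≤ 1` the
Cesàro means tend to `f 0` uniformly over the unit ball of `A(𝔻)`. (ii) ⇒ (i) by scaling.

(i) ⇒ (iii): the Cesàro means of every `f ∈ A(𝔻)` then tend to `f 0` on all of `𝔻̄`. An orbit
that does not tend to `0` stays on the circle, and testing with `f = z ^ k` shows it is
equidistributed, hence dense, so `|φ| = 1` on the circle. Then `φ z = z ψ z` with `ψ` a
nonconstant proper self-map of `𝔻`, so `ψ` takes the value `1` at some `ζ` on the circle; `ζ` is a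
fixed point of `φ` at which the Cesàro means of the identity are constantly `ζ ≠ 0`.
-/

open Function ComplexConjugate

section CesaroAverage

def cesaroAverage (a : ℕ → ℂ) (n : ℕ) : ℂ :=
  (n : ℂ)⁻¹ * ∑ m ∈ Finset.range n, a m

lemma tendsto_cesaroAverage {a : ℕ → ℂ} {l : ℂ} (h : Tendsto a atTop (𝓝 l)) :
    Tendsto (cesaroAverage a) atTop (𝓝 l) := by
  refine h.cesaro_smul.congr fun n => ?_
  simp [cesaroAverage, Complex.real_smul]

lemma cesaroAverage_const (c : ℂ) {n : ℕ} (hn : n ≠ 0) :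
    cesaroAverage (fun _ => c) n = c := by
  simp [cesaroAverage, hn]

lemma cesaroAverage_sub_const (a : ℕ → ℂ) (c : ℂ) {n : ℕ} (hn : n ≠ 0) :
    cesaroAverage (fun m => a m - c) n = cesaroAverage a n - c := by
  simp [cesaroAverage, Finset.sum_sub_distrib, mul_sub, hn]

lemma cesaroAverage_sum {ι : Type*} (s : Finset ι) (c : ι → ℂ) (a : ι → ℕ → ℂ) (n : ℕ) :
    cesaroAverage (fun m => ∑ i ∈ s, c i * a i m) n = ∑ i ∈ s, c i * cesaroAverage (a i) n := by
  simp only [cesaroAverage, Finset.mul_sum]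
  rw [Finset.sum_comm]
  exact Finset.sum_congr rfl fun i _ => Finset.sum_congr rfl fun m _ => by ring

lemma cesaroAverage_conj (a : ℕ → ℂ) (n : ℕ) :
    cesaroAverage (fun m => conj (a m)) n = conj (cesaroAverage a n) := by
  simp [cesaroAverage, map_sum]

lemma norm_cesaroAverage_le {a : ℕ → ℂ} {C : ℝ} (h : ∀ m, ‖a m‖ ≤ C) (n : ℕ) :
    ‖cesaroAverage a n‖ ≤ C := by
  have hC : 0 ≤ C := (norm_nonneg _).trans (h 0)
  rcases eq_or_ne n 0 with rfl | hn
  · simpa [cesaroAverage] using hC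
  calc ‖cesaroAverage a n‖ ≤ (n : ℝ)⁻¹ * ∑ m ∈ Finset.range n, ‖a m‖ := by
        rw [cesaroAverage, norm_mul, norm_inv, Complex.norm_natCast]
        gcongr
        exact norm_sum_le _ _
    _ ≤ (n : ℝ)⁻¹ * (n * C) := by
        gcongr
        simpa using Finset.sum_le_sum fun m (_ : m ∈ Finset.range n) => h m
    _ = C := by field_simp

lemma norm_cesaroAverage_le_of_tail {a : ℕ → ℂ} {A η : ℝ} {M : ℕ} (hA : ∀ m, ‖a m‖ ≤ A)
    (hη : ∀ m ≥ M, ‖a m‖ ≤ η) {n : ℕ} (hn : n ≠ 0) :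
    ‖cesaroAverage a n‖ ≤ A * M / n + η := by
  have hA0 : 0 ≤ A := (norm_nonneg _).trans (hA 0)
  have hη0 : 0 ≤ η := (norm_nonneg _).trans (hη M le_rfl)
  have hsplit : ∀ m, ‖a m‖ ≤ (if m < M then A else 0) + η := fun m => by
    split_ifs with h
    · linarith [hA m]
    · simpa using hη m (not_lt.mp h)
  have hhead : ∑ m ∈ Finset.range n, (if m < M then A else 0) ≤ A * M := by
    rw [← Finset.sum_filter]
    calc ∑ m ∈ (Finset.range n).filter (· < M), A ≤ ∑ m ∈ Finset.range M, A :=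
          Finset.sum_le_sum_of_subset_of_nonneg (fun m hm => by simp at hm ⊢; omega)
            fun _ _ _ => hA0
      _ = A * M := by simp [mul_comm]
  calc ‖cesaroAverage a n‖ ≤ (n : ℝ)⁻¹ * ∑ m ∈ Finset.range n, ‖a m‖ := by
        rw [cesaroAverage, norm_mul, norm_inv, Complex.norm_natCast]
        gcongr
        exact norm_sum_le _ _
    _ ≤ (n : ℝ)⁻¹ * (A * M + n * η) := by
        gcongr
        calc ∑ m ∈ Finset.range n, ‖a m‖
            ≤ ∑ m ∈ Finset.range n, ((if m < M then A else 0) + η) :=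
              Finset.sum_le_sum fun m _ => hsplit m
          _ ≤ A * M + n * η := by
              rw [Finset.sum_add_distrib]
              simpa using hhead
    _ = A * M / n + η := by field_simp

end CesaroAverage

section Equidistribution

variable {u : ℕ → ℂ}

lemma tendsto_cesaroAverage_zpow (hu : ∀ m, ‖u m‖ = 1)
    (hpow : ∀ k : ℕ, k ≠ 0 → Tendsto (cesaroAverage fun m => u m ^ k) atTop (𝓝 0)) (j : ℤ) :
    Tendsto (cesaroAverage fun m => u m ^ j) atTop (𝓝 (if j = 0 then 1 else 0)) := by
  rcases eq_or_ne j 0 with rfl | hj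
  · refine tendsto_const_nhds.congr' ?_
    filter_upwards [eventually_ne_atTop 0] with n hn
    simp [cesaroAverage_const _ hn]
  rw [if_neg hj]
  obtain ⟨k, rfl | rfl⟩ := Int.eq_nat_or_neg j
  · simpa using hpow k (by simpa using hj)
  · have hconj : (fun m => u m ^ (-(k : ℤ))) = fun m => conj (u m ^ k) := by
      ext m
      rw [zpow_neg, zpow_natCast, Complex.inv_eq_conj (by simp [hu m])]
    have hlim := (Complex.continuous_conj.tendsto 0).comp (hpow k (by simpa using hj))
    rw [map_zero] at hlim
    rw [hconj]
    exact hlim.congr fun n => (cesaroAverage_conj _ n).symm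

/-- Parseval's identity for the limit of the empirical measures of `u`. -/
lemma tendsto_cesaroAverage_norm_sq_sum (hu : ∀ m, ‖u m‖ = 1)
    (hzpow : ∀ j : ℤ,
      Tendsto (cesaroAverage fun m => u m ^ j) atTop (𝓝 (if j = 0 then 1 else 0)))
    (s : Finset ℕ) (b : ℕ → ℂ) :
    Tendsto (cesaroAverage fun m => ((‖∑ p ∈ s, b p * u m ^ p‖ ^ 2 : ℝ) : ℂ)) atTop
      (𝓝 ((∑ p ∈ s, ‖b p‖ ^ 2 : ℝ) : ℂ)) := by
  have hexpand : ∀ m, ((‖∑ p ∈ s, b p * u m ^ p‖ ^ 2 : ℝ) : ℂ)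
      = ∑ x ∈ s ×ˢ s, (b x.1 * conj (b x.2)) * u m ^ ((x.1 : ℤ) - x.2) := by
    intro m
    have hu0 : u m ≠ 0 := by simp [← norm_ne_zero_iff, hu m]
    rw [Complex.ofReal_pow, ← Complex.mul_conj', map_sum, Finset.sum_mul_sum,
      Finset.sum_product]
    refine Finset.sum_congr rfl fun p _ => Finset.sum_congr rfl fun q _ => ?_
    rw [map_mul, map_pow, ← Complex.inv_eq_conj (hu m), zpow_sub₀ hu0, zpow_natCast,
      zpow_natCast, inv_pow]
    ring
  have hsum : ∀ n, cesaroAverage (fun m => ((‖∑ p ∈ s, b p * u m ^ p‖ ^ 2 : ℝ) : ℂ)) n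
      = ∑ x ∈ s ×ˢ s, (b x.1 * conj (b x.2)) *
          cesaroAverage (fun m => u m ^ ((x.1 : ℤ) - x.2)) n := fun n => by
    rw [funext hexpand]
    exact cesaroAverage_sum (s ×ˢ s) (fun x => b x.1 * conj (b x.2))
      (fun (x : ℕ × ℕ) (m : ℕ) => u m ^ ((x.1 : ℤ) - x.2)) n
  have hlim : ((∑ p ∈ s, ‖b p‖ ^ 2 : ℝ) : ℂ) = ∑ x ∈ s ×ˢ s, (b x.1 * conj (b x.2)) *
      (if ((x.1 : ℤ) - x.2) = 0 then 1 else 0) := by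
    rw [Finset.sum_product]
    simp [sub_eq_zero, Complex.mul_conj']
  rw [funext hsum, hlim]
  exact tendsto_finsetSum _ fun x _ => (hzpow _).const_mul _

lemma norm_one_add_conj_mul_div_two_sq {ζ w : ℂ} (hζ : ‖ζ‖ = 1) (hw : ‖w‖ = 1) :
    ‖(1 + conj ζ * w) / 2‖ ^ 2 = 1 - ‖w - ζ‖ ^ 2 / 4 := by
  have hrot : ζ * (1 + conj ζ * w) = w + ζ := by
    rw [mul_add, ← mul_assoc, Complex.mul_conj', hζ]
    simp [add_comm]
  have hnorm : ‖1 + conj ζ * w‖ = ‖w + ζ‖ := by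
    rw [← hrot, norm_mul, hζ, one_mul]
  have hpar := parallelogram_law_with_norm ℝ w ζ
  rw [hw, hζ] at hpar
  rw [norm_div, hnorm, Complex.norm_ofNat]
  linarith

lemma one_add_mul_div_two_pow (a w : ℂ) (N : ℕ) :
    ((1 + a * w) / 2) ^ N = ∑ p ∈ Finset.range (N + 1), (N.choose p * a ^ p / 2 ^ N) * w ^ p := by
  rw [div_pow, add_comm, add_pow, Finset.sum_div]
  refine Finset.sum_congr rfl fun p _ => ?_
  ring

lemma sum_norm_sq_binomial {a : ℂ} (ha : ‖a‖ = 1) (N : ℕ) :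
    ∑ p ∈ Finset.range (N + 1), ‖(N.choose p * a ^ p / 2 ^ N : ℂ)‖ ^ 2
      = (2 * N).choose N / 4 ^ N := by
  have h4 : (4 : ℝ) ^ N = (2 ^ N) ^ 2 := by rw [← pow_mul, mul_comm, pow_mul]; norm_num
  simp only [norm_div, norm_mul, norm_pow, ha, Complex.norm_natCast, Complex.norm_ofNat]
  rw [← Nat.sum_range_choose_sq, h4, Nat.cast_sum, Finset.sum_div]
  refine Finset.sum_congr rfl fun p _ => ?_
  push_cast
  ring

/-- The averages of the kernel `|(1 + ζ̄ w) / 2| ^ (2N)`, which is `≤ (1 - δ²/4) ^ N` off the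
`δ`-neighbourhood of `ζ`, tend to `C(2N, N) / 4 ^ N ≥ 1 / (2N + 1)`. -/
lemma sphere_subset_closure_range (hu : ∀ m, ‖u m‖ = 1)
    (hzpow : ∀ j : ℤ,
      Tendsto (cesaroAverage fun m => u m ^ j) atTop (𝓝 (if j = 0 then 1 else 0))) :
    sphere (0 : ℂ) 1 ⊆ closure (range u) := by
  intro ζ hζ
  rw [mem_sphere_zero_iff_norm] at hζ
  rw [Metric.mem_closure_iff]
  intro δ hδ
  by_contra! hfar
  set ρ : ℝ := 1 - δ ^ 2 / 4
  have hkernel : ∀ m, ‖(1 + conj ζ * u m) / 2‖ ^ 2 ≤ ρ := fun m => by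
    rw [norm_one_add_conj_mul_div_two_sq hζ (hu m)]
    have := hfar (u m) (mem_range_self m)
    rw [dist_comm, dist_eq_norm] at this
    have := pow_le_pow_left₀ hδ.le this 2
    simp only [ρ]
    linarith
  have hρ0 : 0 ≤ ρ := (sq_nonneg _).trans (hkernel 0)
  have hρ1 : ρ < 1 := by simp only [ρ]; linarith [pow_pos hδ 2]
  have hbound : ∀ N : ℕ, 1 ≤ (2 * N + 1) * ρ ^ N := by
    intro N
    set b : ℕ → ℂ := fun p => N.choose p * conj ζ ^ p / 2 ^ N
    have hterm : ∀ m, ‖((‖∑ p ∈ Finset.range (N + 1), b p * u m ^ p‖ ^ 2 : ℝ) : ℂ)‖ ≤ ρ ^ N :=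
      fun m => by
        rw [Complex.norm_real, Real.norm_eq_abs, abs_of_nonneg (sq_nonneg _),
          ← one_add_mul_div_two_pow (conj ζ) (u m) N, norm_pow, ← pow_mul, mul_comm N 2, pow_mul]
        exact pow_le_pow_left₀ (sq_nonneg _) (hkernel m) N
    have hle := le_of_tendsto'
      (tendsto_cesaroAverage_norm_sq_sum hu hzpow (Finset.range (N + 1)) b).norm
      fun n => norm_cesaroAverage_le hterm n
    rw [Complex.norm_real, Real.norm_eq_abs, abs_of_nonneg (by positivity),
      sum_norm_sq_binomial (by simpa using hζ), div_le_iff₀ (by positivity)] at hle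
    have hcentral : (4 : ℝ) ^ N ≤ (2 * N + 1) * (2 * N).choose N := by
      exact_mod_cast Nat.four_pow_le_two_mul_add_one_mul_central_binom N
    refine le_of_mul_le_mul_left ?_ (by positivity : (0 : ℝ) < 4 ^ N)
    calc (4 : ℝ) ^ N * 1 ≤ (2 * N + 1) * (2 * N).choose N := by rw [mul_one]; exact hcentral
      _ ≤ (2 * N + 1) * (ρ ^ N * 4 ^ N) := by gcongr
      _ = 4 ^ N * ((2 * N + 1) * ρ ^ N) := by ring
  have htend : Tendsto (fun N : ℕ => (2 * N + 1) * ρ ^ N) atTop (𝓝 0) := by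
    have := ((tendsto_self_mul_const_pow_of_lt_one hρ0 hρ1).const_mul 2).add
      (tendsto_pow_atTop_nhds_zero_of_lt_one hρ0 hρ1)
    simpa [add_mul, mul_assoc] using this
  linarith [ge_of_tendsto' htend hbound]

end Equidistribution

section UnimodularBoundary

variable {f : ℂ → ℂ}

lemma norm_le_one_of_norm_eq_one_on_sphere (hc : ContinuousOn f (closedBall (0 : ℂ) 1))
    (hd : DifferentiableOn ℂ f (ball (0 : ℂ) 1)) (hs : ∀ z ∈ sphere (0 : ℂ) 1, ‖f z‖ = 1)
    {z : ℂ} (hz : z ∈ closedBall (0 : ℂ) 1) :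
    ‖f z‖ ≤ 1 := by
  rw [← closure_ball (0 : ℂ) one_ne_zero] at hc hz
  refine Complex.norm_le_of_forall_mem_frontier_norm_le isBounded_ball ⟨hd, hc⟩
    (fun w hw => (hs w ?_).le) hz
  rwa [frontier_ball (0 : ℂ) one_ne_zero] at hw

lemma mapsTo_ball_of_norm_eq_one_on_sphere (hc : ContinuousOn f (closedBall (0 : ℂ) 1))
    (hd : DifferentiableOn ℂ f (ball (0 : ℂ) 1)) (hs : ∀ z ∈ sphere (0 : ℂ) 1, ‖f z‖ = 1)
    (hnc : ¬ ∃ c, ∀ z ∈ ball (0 : ℂ) 1, f z = c) :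
    MapsTo f (ball (0 : ℂ) 1) (ball (0 : ℂ) 1) := by
  intro z hz
  rw [mem_ball_zero_iff]
  by_contra! hge
  have hmax : IsMaxOn (norm ∘ f) (ball (0 : ℂ) 1) z := fun w hw =>
    (norm_le_one_of_norm_eq_one_on_sphere hc hd hs (ball_subset_closedBall hw)).trans hge
  exact hnc ⟨f z, Complex.eqOn_of_isPreconnected_of_isMaxOn_norm
    (convex_ball (0 : ℂ) 1).isPreconnected isOpen_ball hd hz hmax⟩

/-- A nonconstant `f` is open on `𝔻` and proper (the circle goes to the circle), so `f(𝔻) = 𝔻`. -/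
lemma closedBall_subset_image_of_norm_eq_one_on_sphere
    (hc : ContinuousOn f (closedBall (0 : ℂ) 1))
    (hd : DifferentiableOn ℂ f (ball (0 : ℂ) 1)) (hs : ∀ z ∈ sphere (0 : ℂ) 1, ‖f z‖ = 1)
    (hnc : ¬ ∃ c, ∀ z ∈ ball (0 : ℂ) 1, f z = c) :
    closedBall (0 : ℂ) 1 ⊆ f '' closedBall (0 : ℂ) 1 := by
  have hclosed : IsClosed (f '' closedBall (0 : ℂ) 1) :=
    ((isCompact_closedBall 0 1).image_of_continuousOn hc).isClosed
  have hclosure : closure (f '' ball (0 : ℂ) 1) ⊆ f '' closedBall (0 : ℂ) 1 :=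
    closure_minimal (image_mono ball_subset_closedBall) hclosed
  have hopen : IsOpen (f '' ball (0 : ℂ) 1) :=
    ((hd.analyticOnNhd isOpen_ball).is_constant_or_isOpen
      (convex_ball (0 : ℂ) 1).isPreconnected).resolve_left hnc _ subset_rfl isOpen_ball
  have hmaps := mapsTo_ball_of_norm_eq_one_on_sphere hc hd hs hnc
  have hball : ball (0 : ℂ) 1 ⊆ f '' ball (0 : ℂ) 1 := by
    refine (convex_ball (0 : ℂ) 1).isPreconnected.subset_of_closure_inter_subset hopen
      ⟨f 0, hmaps (mem_ball_self one_pos), 0, mem_ball_self one_pos, rfl⟩ ?_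
    rintro w ⟨hw, hwball⟩
    obtain ⟨z, hz, rfl⟩ := hclosure hw
    rw [← sphere_union_ball] at hz
    rcases hz with hz | hz
    · simp [hs z hz] at hwball
    · exact mem_image_of_mem f hz
  calc closedBall (0 : ℂ) 1 = closure (ball 0 1) := (closure_ball 0 one_ne_zero).symm
    _ ⊆ closure (f '' ball (0 : ℂ) 1) := closure_mono hball
    _ ⊆ f '' closedBall (0 : ℂ) 1 := hclosure

end UnimodularBoundary

section FixedPoints

variable {φ : ℂ → ℂ}

lemma exists_mem_sphere_isFixedPt (hφa : IsDiscAlg φ) (hφ0 : φ 0 = 0)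
    (hs : ∀ z ∈ sphere (0 : ℂ) 1, ‖φ z‖ = 1)
    (hrot : ¬ ∃ c, ∀ z ∈ ball (0 : ℂ) 1, φ z = c * z) :
    ∃ ζ ∈ sphere (0 : ℂ) 1, IsFixedPt φ ζ := by
  set ψ := dslope φ 0
  have hφψ : ∀ z, φ z = z * ψ z := fun z => by
    simpa [hφ0] using (sub_smul_dslope φ 0 z).symm
  have hψc : ContinuousOn ψ (closedBall (0 : ℂ) 1) :=
    (continuousOn_dslope (closedBall_mem_nhds 0 one_pos)).2
      ⟨hφa.1, hφa.2.differentiableAt (ball_mem_nhds 0 one_pos)⟩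
  have hψd : DifferentiableOn ℂ ψ (ball (0 : ℂ) 1) :=
    (differentiableOn_dslope (ball_mem_nhds 0 one_pos)).2 hφa.2
  have hψs : ∀ z ∈ sphere (0 : ℂ) 1, ‖ψ z‖ = 1 := fun z hz => by
    simpa [hφψ, mem_sphere_zero_iff_norm.1 hz] using hs z hz
  have hψnc : ¬ ∃ c, ∀ z ∈ ball (0 : ℂ) 1, ψ z = c := fun ⟨c, hc⟩ =>
    hrot ⟨c, fun z hz => by rw [hφψ, hc z hz, mul_comm]⟩
  obtain ⟨ζ, hζ, hψζ⟩ := closedBall_subset_image_of_norm_eq_one_on_sphere hψc hψd hψs hψnc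
    (mem_closedBall_zero_iff.2 norm_one.le)
  rw [← sphere_union_ball] at hζ
  refine ⟨ζ, hζ.resolve_right fun hball => ?_, by rw [IsFixedPt, hφψ, hψζ, mul_one]⟩
  simpa [hψζ] using mapsTo_ball_of_norm_eq_one_on_sphere hψc hψd hψs hψnc hball

lemma not_exists_eq_const_mul_of_tendsto_iterate (hφc : ContinuousOn φ (closedBall (0 : ℂ) 1))
    (hs : ∀ z ∈ sphere (0 : ℂ) 1, ‖φ z‖ = 1)
    (h0 : ∀ w ∈ ball (0 : ℂ) 1, Tendsto (fun n => φ^[n] w) atTop (𝓝 0)) :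
    ¬ ∃ c, ∀ z ∈ ball (0 : ℂ) 1, φ z = c * z := by
  rintro ⟨c, hc⟩
  have hc1 : ‖c‖ = 1 := by
    have hext : EqOn φ (fun z => c * z) (closedBall (0 : ℂ) 1) :=
      EqOn.of_subset_closure hc hφc (continuousOn_const.mul continuousOn_id)
        ball_subset_closedBall (closure_ball (0 : ℂ) one_ne_zero).ge
    simpa [hext (mem_closedBall_zero_iff.2 norm_one.le)] using hs 1 (by simp)
  have hiso : ∀ n, ∀ z ∈ ball (0 : ℂ) 1, ‖φ^[n] z‖ = ‖z‖ := by
    intro n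
    induction n with
    | zero => simp
    | succ n ih =>
      intro z hz
      have hmem : φ^[n] z ∈ ball (0 : ℂ) 1 := by
        rw [mem_ball_zero_iff, ih z hz]
        exact mem_ball_zero_iff.1 hz
      rw [iterate_succ_apply', hc _ hmem, norm_mul, hc1, one_mul, ih z hz]
  have hhalf : (2⁻¹ : ℂ) ∈ ball (0 : ℂ) 1 := by
    rw [mem_ball_zero_iff]
    norm_num
  have hlim := (h0 _ hhalf).norm
  simp only [hiso _ _ hhalf, norm_zero, tendsto_const_nhds_iff] at hlim
  norm_num at hlim

end FixedPoints

section MeanErgodic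

variable {φ : ℂ → ℂ}

lemma cesaro_eq_cesaroAverage (φ f : ℂ → ℂ) (n : ℕ) (z : ℂ) :
    cesaro φ f n z = cesaroAverage (fun m => f (φ^[m + 1] z)) n := by
  rw [cesaro, cesaroAverage, ← Finset.Ico_add_one_right_eq_Icc, Finset.sum_Ico_eq_sum_range]
  simp only [add_tsub_cancel_right, add_comm 1]

lemma cesaro_const_mul (φ f : ℂ → ℂ) (c : ℂ) (n : ℕ) (z : ℂ) :
    cesaro φ (fun w => c * f w) n z = c * cesaro φ f n z := by
  simp only [cesaro, Finset.mul_sum]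
  exact Finset.sum_congr rfl fun m _ => by ring

lemma cesaro_of_isFixedPt {ζ : ℂ} (hζ : IsFixedPt φ ζ) (f : ℂ → ℂ) {n : ℕ} (hn : n ≠ 0) :
    cesaro φ f n ζ = f ζ := by
  simp only [cesaro_eq_cesaroAverage, (hζ.iterate _).eq]
  exact cesaroAverage_const _ hn

lemma tendsto_cesaro_of_tendsto_iterate {f : ℂ → ℂ} {z : ℂ}
    (hz : Tendsto (fun n => φ^[n] z) atTop (𝓝 0)) (hf : ContinuousAt f 0) :
    Tendsto (fun n => cesaro φ f n z) atTop (𝓝 (f 0)) := by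
  simp only [cesaro_eq_cesaroAverage]
  exact tendsto_cesaroAverage (hf.tendsto.comp ((tendsto_add_atTop_iff_nat 1).2 hz))

lemma continuousOn_cesaro {s : Set ℂ} (hφc : ContinuousOn φ s) (hφm : MapsTo φ s s)
    {f : ℂ → ℂ} (hf : ContinuousOn f s) (n : ℕ) : ContinuousOn (cesaro φ f n) s :=
  continuousOn_const.mul <| continuousOn_finsetSum _ fun m _ =>
    hf.comp (hφc.iterate hφm m) (hφm.iterate m)

/-- The uniform limit is continuous on `𝔻̄` and equals `f 0` on `𝔻`, where orbits tend to `0`. -/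
lemma MeanErgodicDiscAlg.tendsto_cesaro (hME : MeanErgodicDiscAlg φ)
    (hφc : ContinuousOn φ (closedBall (0 : ℂ) 1))
    (hφm : MapsTo φ (closedBall (0 : ℂ) 1) (closedBall (0 : ℂ) 1))
    (h0 : ∀ w ∈ ball (0 : ℂ) 1, Tendsto (fun n => φ^[n] w) atTop (𝓝 0)) {f : ℂ → ℂ}
    (hf : IsDiscAlg f) {z : ℂ} (hz : z ∈ closedBall (0 : ℂ) 1) :
    Tendsto (fun n => cesaro φ f n z) atTop (𝓝 (f 0)) := by
  obtain ⟨g, hg⟩ := hME f hf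
  have hgc : ContinuousOn g (closedBall (0 : ℂ) 1) :=
    hg.continuousOn (Eventually.of_forall (continuousOn_cesaro hφc hφm hf.1)).frequently
  have hf0 : ContinuousAt f 0 := hf.1.continuousAt (closedBall_mem_nhds 0 one_pos)
  have hg0 : EqOn g (fun _ => f 0) (closedBall (0 : ℂ) 1) :=
    EqOn.of_subset_closure (fun w hw => tendsto_nhds_unique (hg.tendsto_at
        (ball_subset_closedBall hw)) (tendsto_cesaro_of_tendsto_iterate (h0 w hw) hf0))
      hgc continuousOn_const ball_subset_closedBall (closure_ball (0 : ℂ) one_ne_zero).ge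
  simpa [hg0 hz] using hg.tendsto_at hz

lemma MeanErgodicDiscAlg.eq_zero_of_isFixedPt (hME : MeanErgodicDiscAlg φ)
    (hφc : ContinuousOn φ (closedBall (0 : ℂ) 1))
    (hφm : MapsTo φ (closedBall (0 : ℂ) 1) (closedBall (0 : ℂ) 1))
    (h0 : ∀ w ∈ ball (0 : ℂ) 1, Tendsto (fun n => φ^[n] w) atTop (𝓝 0)) {ζ : ℂ}
    (hζ : ζ ∈ closedBall (0 : ℂ) 1) (hfix : IsFixedPt φ ζ) : ζ = 0 := by
  have hid : IsDiscAlg id := ⟨continuousOn_id, differentiableOn_id⟩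
  refine tendsto_nhds_unique (tendsto_const_nhds.congr' ?_) (hME.tendsto_cesaro hφc hφm h0 hid hζ)
  filter_upwards [eventually_ne_atTop 0] with n hn
  exact (cesaro_of_isFixedPt hfix id hn).symm

lemma MeanErgodicDiscAlg.norm_eq_one_on_sphere (hME : MeanErgodicDiscAlg φ)
    (hφc : ContinuousOn φ (closedBall (0 : ℂ) 1))
    (hφm : MapsTo φ (closedBall (0 : ℂ) 1) (closedBall (0 : ℂ) 1))
    (h0 : ∀ w ∈ ball (0 : ℂ) 1, Tendsto (fun n => φ^[n] w) atTop (𝓝 0)) {z₀ : ℂ}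
    (hz₀ : z₀ ∈ closedBall (0 : ℂ) 1) (hnot : ¬ Tendsto (fun n => φ^[n] z₀) atTop (𝓝 0)) :
    ∀ ζ ∈ sphere (0 : ℂ) 1, ‖φ ζ‖ = 1 := by
  have horbit : ∀ k, ‖φ^[k] z₀‖ = 1 := by
    intro k
    refine le_antisymm (mem_closedBall_zero_iff.1 (hφm.iterate k hz₀)) (not_lt.1 fun hlt => hnot ?_)
    refine (tendsto_add_atTop_iff_nat k).1 ((h0 _ (mem_ball_zero_iff.2 hlt)).congr fun n => ?_)
    rw [iterate_add_apply]
  set u : ℕ → ℂ := fun m => φ^[m + 1] z₀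
  have hu : ∀ m, ‖u m‖ = 1 := fun m => horbit (m + 1)
  have hpow : ∀ k : ℕ, k ≠ 0 → Tendsto (cesaroAverage fun m => u m ^ k) atTop (𝓝 0) := by
    intro k hk
    have hf : IsDiscAlg (· ^ k) :=
      ⟨(continuous_pow k).continuousOn, (differentiable_pow k).differentiableOn⟩
    have hlim := hME.tendsto_cesaro hφc hφm h0 hf hz₀
    rw [zero_pow hk] at hlim
    simpa only [cesaro_eq_cesaroAverage] using hlim
  have hdense := sphere_subset_closure_range hu (tendsto_cesaroAverage_zpow hu hpow)
  have hclosure : closure (range u) ⊆ closedBall (0 : ℂ) 1 :=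
    closure_minimal (range_subset_iff.2 fun m => mem_closedBall_zero_iff.2 (hu m).le)
      isClosed_closedBall
  have hnorm : EqOn (fun z => ‖φ z‖) (fun _ => 1) (closure (range u)) := by
    refine EqOn.of_subset_closure ?_ (hφc.mono hclosure).norm continuousOn_const subset_closure
      subset_rfl
    rintro _ ⟨m, rfl⟩
    simpa [u, ← iterate_succ_apply' φ] using horbit (m + 2)
  exact fun ζ hζ => hnorm (hdense hζ)

theorem MeanErgodicDiscAlg.tendsto_iterate (hME : MeanErgodicDiscAlg φ) (hφa : IsDiscAlg φ)
    (hφm : MapsTo φ (closedBall (0 : ℂ) 1) (closedBall (0 : ℂ) 1))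
    (h0 : ∀ w ∈ ball (0 : ℂ) 1, Tendsto (fun n => φ^[n] w) atTop (𝓝 0)) :
    ∀ z ∈ closedBall (0 : ℂ) 1, Tendsto (fun n => φ^[n] z) atTop (𝓝 0) := by
  intro z₀ hz₀
  by_contra hnot
  have hs := hME.norm_eq_one_on_sphere hφa.1 hφm h0 hz₀ hnot
  have hφ0 : φ 0 = 0 := isFixedPt_of_tendsto_iterate (h0 0 (mem_ball_self one_pos))
    (hφa.1.continuousAt (closedBall_mem_nhds 0 one_pos))
  obtain ⟨ζ, hζ, hfix⟩ := exists_mem_sphere_isFixedPt hφa hφ0 hs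
    (not_exists_eq_const_mul_of_tendsto_iterate hφa.1 hs h0)
  exact ne_of_mem_sphere hζ one_ne_zero
    (hME.eq_zero_of_isFixedPt hφa.1 hφm h0 (sphere_subset_closedBall hζ) hfix)

end MeanErgodic

section UniformlyMeanErgodic

variable {φ : ℂ → ℂ}

lemma norm_sub_le_two_mul_norm {f : ℂ → ℂ} (hd : DifferentiableOn ℂ f (ball (0 : ℂ) 1))
    (hb : ∀ z ∈ closedBall (0 : ℂ) 1, ‖f z‖ ≤ 1) {w : ℂ} (hw : w ∈ closedBall (0 : ℂ) 1) :
    ‖f w - f 0‖ ≤ 2 * ‖w‖ := by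
  have hdiam : ∀ z ∈ closedBall (0 : ℂ) 1, ‖f z - f 0‖ ≤ 2 := fun z hz => by
    linarith [norm_sub_le (f z) (f 0), hb z hz, hb 0 (mem_closedBall_self zero_le_one)]
  rw [← sphere_union_ball] at hw
  rcases hw with hw | hw
  · simpa [mem_sphere_zero_iff_norm.1 hw] using hdiam w (sphere_subset_closedBall hw)
  · have hmaps : MapsTo f (ball (0 : ℂ) 1) (closedBall (f 0) 2) := fun z hz => by
      simpa [dist_eq_norm] using hdiam z (ball_subset_closedBall hz)
    simpa [dist_eq_norm] using Complex.dist_le_div_mul_dist_of_mapsTo_ball hd hmaps hw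

lemma exists_iterate_mapsTo {α : Type*} [TopologicalSpace α] {f : α → α} {K U : Set α}
    (hK : IsCompact K) (hfc : ContinuousOn f K) (hfK : MapsTo f K K) (hU : IsOpen U)
    (hfU : MapsTo f U U) (h : ∀ z ∈ K, ∃ k, f^[k] z ∈ U) : ∃ N, MapsTo f^[N] K U := by
  choose! k hk using h
  obtain ⟨t, -, hcover⟩ := hK.elim_nhdsWithin_subcover (fun z => f^[k z] ⁻¹' U) fun z hz =>
    (hfc.iterate hfK (k z) z hz).preimage_mem_nhdsWithin (hU.mem_nhds (hk z hz))
  refine ⟨t.sup k, fun z hz => ?_⟩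
  obtain ⟨x, hx, hzx⟩ := mem_iUnion₂.1 (hcover hz)
  rw [← Nat.sub_add_cancel (Finset.le_sup hx), iterate_add_apply]
  exact hfU.iterate _ hzx

lemma tendstoUniformlyOn_iterate_closedBall (hφc : ContinuousOn φ (closedBall (0 : ℂ) 1))
    (hφm : MapsTo φ (closedBall (0 : ℂ) 1) (closedBall (0 : ℂ) 1))
    (hφb : MapsTo φ (ball (0 : ℂ) 1) (ball (0 : ℂ) 1))
    (hDW : TendstoLocallyUniformlyOn (fun (n : ℕ) (z : ℂ) => φ^[n] z) (fun _ => (0 : ℂ))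
      atTop (ball (0 : ℂ) 1))
    (h : ∀ z ∈ closedBall (0 : ℂ) 1, Tendsto (fun n => φ^[n] z) atTop (𝓝 0)) :
    TendstoUniformlyOn (fun (n : ℕ) (z : ℂ) => φ^[n] z) (fun _ => 0) atTop
      (closedBall (0 : ℂ) 1) := by
  obtain ⟨N, hN⟩ := exists_iterate_mapsTo (isCompact_closedBall 0 1) hφc hφm isOpen_ball hφb
    fun z hz => ((h z hz).eventually (ball_mem_nhds 0 one_pos)).exists
  have hK : IsCompact (φ^[N] '' closedBall (0 : ℂ) 1) :=
    (isCompact_closedBall 0 1).image_of_continuousOn (hφc.iterate hφm N)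
  have hunif := (tendstoLocallyUniformlyOn_iff_forall_isCompact isOpen_ball).1 hDW _
    (image_subset_iff.2 hN) hK
  rw [Metric.tendstoUniformlyOn_iff] at hunif ⊢
  intro ε hε
  filter_upwards [(tendsto_sub_atTop_nat N).eventually (hunif ε hε), eventually_ge_atTop N]
    with m hm hmN z hz
  simpa [← iterate_add_apply, Nat.sub_add_cancel hmN] using hm _ (mem_image_of_mem _ hz)

lemma unifMeanErgodicDiscAlg_of_tendstoUniformlyOn
    (hφm : MapsTo φ (closedBall (0 : ℂ) 1) (closedBall (0 : ℂ) 1))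
    (h : TendstoUniformlyOn (fun (n : ℕ) (z : ℂ) => φ^[n] z) (fun _ => 0) atTop
      (closedBall (0 : ℂ) 1)) :
    UnifMeanErgodicDiscAlg φ := by
  refine ⟨fun f _ => f 0, fun ε hε => ?_⟩
  obtain ⟨M, hM⟩ := eventually_atTop.1 (Metric.tendstoUniformlyOn_iff.1 h (ε / 4) (by positivity))
  obtain ⟨N, hN⟩ := eventually_atTop.1
    ((tendsto_const_div_atTop_nhds_zero_nat (2 * (M : ℝ))).eventually (gt_mem_nhds (half_pos hε)))
  refine ⟨max N 1, fun n hn f hf hf1 z hz => ?_⟩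
  have hn0 : n ≠ 0 := by omega
  have hschwarz : ∀ m, ‖f (φ^[m + 1] z) - f 0‖ ≤ 2 * ‖φ^[m + 1] z‖ := fun m =>
    norm_sub_le_two_mul_norm hf.2 hf1 (hφm.iterate _ hz)
  have hsmall : ∀ m ≥ M, ‖φ^[m + 1] z‖ ≤ ε / 4 := fun m hm => by
    simpa using (hM (m + 1) (by omega) z hz).le
  rw [cesaro_eq_cesaroAverage, ← cesaroAverage_sub_const _ _ hn0]
  calc _ ≤ 2 * M / n + ε / 2 := norm_cesaroAverage_le_of_tail
        (fun m => (hschwarz m).trans (by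
          linarith [mem_closedBall_zero_iff.1 (hφm.iterate (m + 1) hz)]))
        (fun m hm => (hschwarz m).trans (by linarith [hsmall m hm])) hn0
    _ ≤ ε := by linarith [hN n (le_of_max_le_left hn)]

lemma UnifMeanErgodicDiscAlg.meanErgodicDiscAlg (hU : UnifMeanErgodicDiscAlg φ) :
    MeanErgodicDiscAlg φ := by
  obtain ⟨P, hP⟩ := hU
  intro f hf
  obtain ⟨C, hC⟩ := (isCompact_closedBall (0 : ℂ) 1).exists_bound_of_continuousOn hf.1
  set c : ℝ := max C 1
  have hc : 0 < c := lt_max_of_lt_right one_pos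
  set f₁ : ℂ → ℂ := fun z => (c : ℂ)⁻¹ * f z
  have hf₁ : IsDiscAlg f₁ := ⟨continuousOn_const.mul hf.1, hf.2.const_mul _⟩
  have hf₁b : ∀ z ∈ closedBall (0 : ℂ) 1, ‖f₁ z‖ ≤ 1 := fun z hz => by
    rw [norm_mul, norm_inv, Complex.norm_real, Real.norm_of_nonneg hc.le, inv_mul_le_one₀ hc]
    exact (hC z hz).trans (le_max_left _ _)
  refine ⟨fun z => c * P f₁ z, Metric.tendstoUniformlyOn_iff.2 fun ε hε => ?_⟩
  obtain ⟨N, hN⟩ := hP (ε / (2 * c)) (by positivity)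
  filter_upwards [eventually_ge_atTop N] with n hn z hz
  have hlin : cesaro φ f n z = c * cesaro φ f₁ n z := by
    rw [cesaro_const_mul, ← mul_assoc, mul_inv_cancel₀ (by exact_mod_cast hc.ne'), one_mul]
  rw [dist_eq_norm, hlin, ← mul_sub, norm_mul, Complex.norm_real, Real.norm_of_nonneg hc.le,
    norm_sub_rev]
  calc c * ‖cesaro φ f₁ n z - P f₁ z‖ ≤ c * (ε / (2 * c)) := by
        gcongr
        exact hN n hn f₁ hf₁ hf₁b z hz
    _ = ε / 2 := by field_simp
    _ < ε := half_lt_self hε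

end UniformlyMeanErgodic

/-- **Interior Denjoy–Wolff point, `A(𝔻)` case.** Let `φ ∈ A(𝔻)` map `𝔻̄` into `𝔻̄` with
Denjoy–Wolff point `0` (i.e. `φ^n → 0` uniformly on compact subsets of `𝔻`). Then the
following are equivalent: (i) `C_φ` is mean ergodic on `A(𝔻)`; (ii) `C_φ` is uniformly
mean ergodic on `A(𝔻)`; (iii) `φ^n(z) → 0` for every `z ∈ 𝔻̄`. -/
theorem stmt_8 (φ : ℂ → ℂ) (hφa : IsDiscAlg φ)
    (hφm : MapsTo φ (closedBall (0:ℂ) 1) (closedBall (0:ℂ) 1))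
    (hφb : MapsTo φ (ball (0:ℂ) 1) (ball (0:ℂ) 1))
    (hDW : TendstoLocallyUniformlyOn (fun (n : ℕ) (z : ℂ) => φ^[n] z) (fun _ => (0:ℂ))
      atTop (ball (0:ℂ) 1)) :
    (MeanErgodicDiscAlg φ ↔
      ∀ z ∈ closedBall (0:ℂ) 1, Tendsto (fun n : ℕ => φ^[n] z) atTop (𝓝 (0:ℂ))) ∧
    (UnifMeanErgodicDiscAlg φ ↔
      ∀ z ∈ closedBall (0:ℂ) 1, Tendsto (fun n : ℕ => φ^[n] z) atTop (𝓝 (0:ℂ))) := by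
  have h0 : ∀ w ∈ ball (0 : ℂ) 1, Tendsto (fun n => φ^[n] w) atTop (𝓝 0) := fun w hw => by
    simpa using hDW.tendsto_at hw
  have hME : MeanErgodicDiscAlg φ → ∀ z ∈ closedBall (0 : ℂ) 1,
      Tendsto (fun n => φ^[n] z) atTop (𝓝 0) := fun h => h.tendsto_iterate hφa hφm h0
  have hUME : (∀ z ∈ closedBall (0 : ℂ) 1, Tendsto (fun n => φ^[n] z) atTop (𝓝 0)) →
      UnifMeanErgodicDiscAlg φ := fun h => unifMeanErgodicDiscAlg_of_tendstoUniformlyOn hφm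
    (tendstoUniformlyOn_iterate_closedBall hφa.1 hφm hφb hDW h)
  exact ⟨⟨hME, fun h => (hUME h).meanErgodicDiscAlg⟩, ⟨fun h => hME h.meanErgodicDiscAlg, hUME⟩⟩
end
end
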